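/- Perturbation of supersolutions by a strictly positive smooth function: let T > 0, λ := γ̄·M + 1, and H̃(t,x,r,p,N) := −λ·r + e^{λt}·H(x, e^{−λt}·r, e^{−λt}·p, e^{−λt}·N). For ρ ≥ 0 set φ_ρ(t,x) := e^{−ρt}·(1 + |x|²). Then there exists ρ₀ ≥ 0, depending only on d and on the uniform bounds for b and σ, such that for every ρ ≥ ρ₀, every ε > 0, and every continuous viscosity supersolution u : [0,T]×ℝ^d → ℝ of ∂_t u + H̃(t, x, u, D_x u, D²_x u) = 0 on [0,T)×ℝ^d with u bounded, the function u + ε·φ_ρ is again a viscosity supersolution of the same equation on [0,T)×ℝ^d. -/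

import Mathlib

open scoped BigOperators
open Set Filter

noncomputable section

/-- Clamp a real number to the interval `[-1, 1]`. -/
def clamp (r : ℝ) : ℝ := max (-1) (min 1 r)

/-- Dot product on `Fin n → ℝ`. -/
def dotp {n : ℕ} (x y : Fin n → ℝ) : ℝ := ∑ i, x i * y i

/-- The clamped branching nonlinearity `G^a(x,r)`. -/
def Gb {d : ℕ} {A : Type*} (γ : (Fin d → ℝ) → A → ℝ)
    (p : ℕ → (Fin d → ℝ) → A → ℝ) (x : Fin d → ℝ) (a : A) (r : ℝ) : ℝ :=
  γ x a * ((∑' k : ℕ, p k x a * (clamp r) ^ k) - clamp r)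

/-- The Hamiltonian
`H(x,r,p,N) = inf_a { b·p + (1/2) tr(σσᵀ N) + G^a(x,r) - c(x,a) r }`. -/
def Ham {d m : ℕ} {A : Type*} (b : (Fin d → ℝ) → A → (Fin d → ℝ))
    (σ : (Fin d → ℝ) → A → (Fin d → Fin m → ℝ))
    (γ : (Fin d → ℝ) → A → ℝ) (p : ℕ → (Fin d → ℝ) → A → ℝ)
    (c : (Fin d → ℝ) → A → ℝ)
    (x : Fin d → ℝ) (r : ℝ) (q : Fin d → ℝ) (N : Fin d → Fin d → ℝ) : ℝ :=
  ⨅ a : A, (dotp (b x a) q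
      + (1 / 2) * (∑ i, ∑ j, (∑ l, σ x a i l * σ x a j l) * N j i)
      + Gb γ p x a r - c x a * r)

/-- A modulus of continuity: nondecreasing, nonnegative, tending to `0` at `0⁺`. -/
def IsModulus (ρ : ℝ → ℝ) : Prop :=
  (∀ s, 0 ≤ ρ s) ∧ Monotone ρ ∧
    Filter.Tendsto ρ (nhdsWithin 0 (Set.Ioi 0)) (nhds 0)

/-- The continuous linear map `v ↦ dotp w v` on `Fin n → ℝ`. -/
def gradCLM {n : ℕ} (w : Fin n → ℝ) : (Fin n → ℝ) →L[ℝ] ℝ :=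
  ∑ i, w i • (ContinuousLinearMap.proj i : (Fin n → ℝ) →L[ℝ] ℝ)

/-- Test function data: a candidate test function together with its time
derivative, spatial gradient and spatial Hessian. -/
structure TestData (d : ℕ) where
  φ : ℝ → (Fin d → ℝ) → ℝ
  φt : ℝ → (Fin d → ℝ) → ℝ
  Dφ : ℝ → (Fin d → ℝ) → (Fin d → ℝ)
  D2φ : ℝ → (Fin d → ℝ) → (Fin d → Fin d → ℝ)

/-- `ψ` records a function which is `C¹` in time and `C²` in space, together with
its derivatives. -/
def IsC12 {d : ℕ} (ψ : TestData d) : Prop :=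
  (∀ s y, HasDerivAt (fun τ => ψ.φ τ y) (ψ.φt s y) s) ∧
  (∀ s y, HasFDerivAt (fun z => ψ.φ s z) (gradCLM (ψ.Dφ s y)) y) ∧
  (∀ s y i, HasFDerivAt (fun z => ψ.Dφ s z i) (gradCLM (fun j => ψ.D2φ s y i j)) y) ∧
  Continuous (fun q : ℝ × (Fin d → ℝ) => ψ.φ q.1 q.2) ∧
  Continuous (fun q : ℝ × (Fin d → ℝ) => ψ.φt q.1 q.2) ∧
  Continuous (fun q : ℝ × (Fin d → ℝ) => ψ.Dφ q.1 q.2) ∧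
  Continuous (fun q : ℝ × (Fin d → ℝ) => ψ.D2φ q.1 q.2)

/-- Viscosity subsolution of `∂ₜ u + F(t, x, u, D_x u, D²_x u) = 0` on `[0,T) × ℝ^d`. -/
def IsViscSubsoln {d : ℕ} (T : ℝ)
    (F : ℝ → (Fin d → ℝ) → ℝ → (Fin d → ℝ) → (Fin d → Fin d → ℝ) → ℝ)
    (u : ℝ → (Fin d → ℝ) → ℝ) : Prop :=
  ∀ t x, 0 ≤ t → t < T → ∀ ψ : TestData d, IsC12 ψ →
    IsLocalMaxOn (fun q : ℝ × (Fin d → ℝ) => u q.1 q.2 - ψ.φ q.1 q.2)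
      (Set.Icc (0 : ℝ) T ×ˢ (Set.univ : Set (Fin d → ℝ))) (t, x) →
    u t x = ψ.φ t x →
    0 ≤ ψ.φt t x + F t x (u t x) (ψ.Dφ t x) (ψ.D2φ t x)

/-- Viscosity supersolution of `∂ₜ u + F(t, x, u, D_x u, D²_x u) = 0` on `[0,T) × ℝ^d`. -/
def IsViscSupersoln {d : ℕ} (T : ℝ)
    (F : ℝ → (Fin d → ℝ) → ℝ → (Fin d → ℝ) → (Fin d → Fin d → ℝ) → ℝ)
    (u : ℝ → (Fin d → ℝ) → ℝ) : Prop :=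
  ∀ t x, 0 ≤ t → t < T → ∀ ψ : TestData d, IsC12 ψ →
    IsLocalMinOn (fun q : ℝ × (Fin d → ℝ) => u q.1 q.2 - ψ.φ q.1 q.2)
      (Set.Icc (0 : ℝ) T ×ˢ (Set.univ : Set (Fin d → ℝ))) (t, x) →
    u t x = ψ.φ t x →
    ψ.φt t x + F t x (u t x) (ψ.Dφ t x) (ψ.D2φ t x) ≤ 0



/-- The exponentially rescaled Hamiltonian
`H̃(t,x,r,p,N) = −λ r + e^{λt} H(x, e^{−λt} r, e^{−λt} p, e^{−λt} N)`. -/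
def HamT {d m : ℕ} {A : Type*} (b : (Fin d → ℝ) → A → (Fin d → ℝ))
    (σ : (Fin d → ℝ) → A → (Fin d → Fin m → ℝ))
    (γ : (Fin d → ℝ) → A → ℝ) (p : ℕ → (Fin d → ℝ) → A → ℝ)
    (c : (Fin d → ℝ) → A → ℝ) (lam : ℝ)
    (t : ℝ) (x : Fin d → ℝ) (r : ℝ) (q : Fin d → ℝ) (N : Fin d → Fin d → ℝ) : ℝ :=
  -lam * r + Real.exp (lam * t) *
    Ham b σ γ p c x (Real.exp (-lam * t) * r)
      (fun i => Real.exp (-lam * t) * q i)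
      (fun i j => Real.exp (-lam * t) * N i j)

/-! If a test function `ψ` touches `u + Φ` from below, then `ψ - Φ` touches `u` from below, so
`u + Φ` is again a supersolution as soon as `∂ₜΦ + H̃(r + Φ, q + DΦ, N + D²Φ) ≤ H̃(r, q, N)`
for all `(r, q, N)`. For `Φ = ε e^{-ρt}(1 + |x|²)` this holds: inside the infimum the
generator part grows by at most `K Φ` with `K = d (C_b + m C_σ²)` (the bounds on `b` and `σ`),
the branching term grows by at most `γ̄ M Φ` (its generating function is `M`-Lipschitz on
`[-1, 1]`), the discount term only decreases, and `-λ r` returns `(γ̄ M + 1) Φ`; the rest is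
absorbed by `∂ₜΦ = -ρ Φ` once `ρ ≥ K`. -/

lemma abs_clamp_le_one (r : ℝ) : |clamp r| ≤ 1 :=
  abs_le.mpr ⟨le_max_left _ _, max_le (by norm_num) (min_le_left _ _)⟩

lemma clamp_mono : Monotone clamp :=
  fun _ _ h => max_le_max le_rfl (min_le_min le_rfl h)

lemma clamp_sub_clamp_le {r s : ℝ} (h : r ≤ s) : clamp s - clamp r ≤ s - r := by
  unfold clamp
  simp only [max_def, min_def]
  split_ifs <;> linarith

lemma pow_sub_pow_le_natCast_mul {a b : ℝ} (ha : |a| ≤ 1) (hb : |b| ≤ 1) (k : ℕ) :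
    a ^ k - b ^ k ≤ k * |a - b| :=
  calc a ^ k - b ^ k ≤ |a - b| * k * max |a| |b| ^ (k - 1) :=
        (le_abs_self _).trans (abs_pow_sub_pow_le a b k)
    _ ≤ |a - b| * k * 1 := by gcongr; exact pow_le_one₀ (by positivity) (max_le ha hb)
    _ = k * |a - b| := by ring

section GeneratingFunction

variable {P : ℕ → ℝ} {s s' S : ℝ}

lemma summable_mul_pow (hP0 : ∀ k, 0 ≤ P k) (hP : Summable P) (hs : |s| ≤ 1) :
    Summable fun k => P k * s ^ k :=
  hP.of_norm_bounded fun k => by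
    rw [Real.norm_eq_abs, abs_mul, abs_pow, abs_of_nonneg (hP0 k)]
    exact mul_le_of_le_one_right (hP0 k) (pow_le_one₀ (abs_nonneg s) hs)

lemma abs_tsum_mul_pow_le_one (hP0 : ∀ k, 0 ≤ P k) (hP : HasSum P 1) (hs : |s| ≤ 1) :
    |∑' k, P k * s ^ k| ≤ 1 :=
  tsum_of_norm_bounded (f := fun k => P k * s ^ k) hP fun k => by
    rw [Real.norm_eq_abs, abs_mul, abs_pow, abs_of_nonneg (hP0 k)]
    exact mul_le_of_le_one_right (hP0 k) (pow_le_one₀ (abs_nonneg s) hs)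

lemma tsum_mul_pow_sub_tsum_mul_pow_le (hP0 : ∀ k, 0 ≤ P k) (hP : Summable P)
    (hS : HasSum (fun k : ℕ => (k : ℝ) * P k) S) (hs : |s| ≤ 1) (hs' : |s'| ≤ 1) :
    ∑' k, P k * s' ^ k - ∑' k, P k * s ^ k ≤ S * |s' - s| := by
  refine hasSum_le (fun k => ?_) ((summable_mul_pow hP0 hP hs').hasSum.sub
    (summable_mul_pow hP0 hP hs).hasSum) (hS.mul_right |s' - s|)
  calc P k * s' ^ k - P k * s ^ k = P k * (s' ^ k - s ^ k) := by ring
    _ ≤ P k * (k * |s' - s|) := by gcongr; exacts [hP0 k, pow_sub_pow_le_natCast_mul hs' hs k]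
    _ = k * P k * |s' - s| := by ring

end GeneratingFunction

section Branching

variable {d : ℕ} {A : Type*} {γ : (Fin d → ℝ) → A → ℝ} {p : ℕ → (Fin d → ℝ) → A → ℝ}
  {x : Fin d → ℝ} {a : A} {γbar M : ℝ}

lemma Gb_sub_Gb_le (hγ : γ x a ∈ Icc 0 γbar) (hp0 : ∀ k, 0 ≤ p k x a)
    (hpsum : HasSum (fun k => p k x a) 1)
    (hpmean : ∃ S, S ≤ M ∧ HasSum (fun k : ℕ => (k : ℝ) * p k x a) S) {r r' : ℝ} (h : r ≤ r') :
    Gb γ p x a r' - Gb γ p x a r ≤ γbar * M * (r' - r) := by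
  obtain ⟨S, hSM, hS⟩ := hpmean
  have hΔ : 0 ≤ clamp r' - clamp r := sub_nonneg.mpr (clamp_mono h)
  have hgen := tsum_mul_pow_sub_tsum_mul_pow_le hp0 hpsum.summable hS
    (abs_clamp_le_one r) (abs_clamp_le_one r')
  rw [abs_of_nonneg hΔ] at hgen
  have hS0 : 0 ≤ S := hS.nonneg fun k => mul_nonneg k.cast_nonneg (hp0 k)
  calc Gb γ p x a r' - Gb γ p x a r
        = γ x a * ((∑' k, p k x a * clamp r' ^ k - ∑' k, p k x a * clamp r ^ k)
          - (clamp r' - clamp r)) := by unfold Gb; ring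
    _ ≤ γ x a * (S * (clamp r' - clamp r)) := by gcongr; exacts [hγ.1, by linarith]
    _ ≤ γbar * (M * (r' - r)) :=
        mul_le_mul hγ.2 (mul_le_mul hSM (clamp_sub_clamp_le h) hΔ (hS0.trans hSM))
          (mul_nonneg hS0 hΔ) (hγ.1.trans hγ.2)
    _ = γbar * M * (r' - r) := by ring

lemma neg_two_mul_le_Gb (hγ : γ x a ∈ Icc 0 γbar) (hp0 : ∀ k, 0 ≤ p k x a)
    (hpsum : HasSum (fun k => p k x a) 1) (r : ℝ) : -(2 * γbar) ≤ Gb γ p x a r := by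
  have hgen := abs_le.mp (abs_tsum_mul_pow_le_one hp0 hpsum (abs_clamp_le_one r))
  have hχ := abs_le.mp (abs_clamp_le_one r)
  have := mul_nonneg hγ.1
    (show 0 ≤ ∑' k, p k x a * clamp r ^ k - clamp r + 2 by linarith)
  unfold Gb
  linarith [hγ.2]

end Branching

lemma gradCLM_apply {n : ℕ} (w z : Fin n → ℝ) : gradCLM w z = ∑ i, w i * z i := by
  simp [gradCLM]

lemma gradCLM_sub {n : ℕ} (w v : Fin n → ℝ) : gradCLM (w - v) = gradCLM w - gradCLM v := by
  ext z
  simp [gradCLM_apply, sub_mul]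

namespace TestData

variable {d : ℕ}

instance : Sub (TestData d) :=
  ⟨fun ψ Φ => ⟨ψ.φ - Φ.φ, ψ.φt - Φ.φt, ψ.Dφ - Φ.Dφ, ψ.D2φ - Φ.D2φ⟩⟩

@[simp] lemma sub_φ (ψ Φ : TestData d) : (ψ - Φ).φ = ψ.φ - Φ.φ := rfl
@[simp] lemma sub_φt (ψ Φ : TestData d) : (ψ - Φ).φt = ψ.φt - Φ.φt := rfl
@[simp] lemma sub_Dφ (ψ Φ : TestData d) : (ψ - Φ).Dφ = ψ.Dφ - Φ.Dφ := rfl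
@[simp] lemma sub_D2φ (ψ Φ : TestData d) : (ψ - Φ).D2φ = ψ.D2φ - Φ.D2φ := rfl

end TestData

lemma IsC12.sub {d : ℕ} {ψ Φ : TestData d} (hψ : IsC12 ψ) (hΦ : IsC12 Φ) : IsC12 (ψ - Φ) := by
  obtain ⟨ht, hx, hxx, c, ct, cx, cxx⟩ := hψ
  obtain ⟨ht', hx', hxx', c', ct', cx', cxx'⟩ := hΦ
  refine ⟨fun s y => (ht s y).sub (ht' s y), fun s y => ?_, fun s y i => ?_,
    c.sub c', ct.sub ct', cx.sub cx', cxx.sub cxx'⟩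
  · show HasFDerivAt (fun z => ψ.φ s z - Φ.φ s z) (gradCLM (ψ.Dφ s y - Φ.Dφ s y)) y
    rw [gradCLM_sub]
    exact (hx s y).sub (hx' s y)
  · show HasFDerivAt (fun z => ψ.Dφ s z i - Φ.Dφ s z i)
      (gradCLM ((fun j => ψ.D2φ s y i j) - fun j => Φ.D2φ s y i j)) y
    rw [gradCLM_sub]
    exact (hxx s y i).sub (hxx' s y i)

lemma hasFDerivAt_sum_sq {n : ℕ} (y : Fin n → ℝ) :
    HasFDerivAt (fun z : Fin n → ℝ => ∑ i, z i ^ 2) (gradCLM fun i => 2 * y i) y := by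
  have h := HasFDerivAt.fun_sum (u := Finset.univ) fun i _ =>
    ((ContinuousLinearMap.proj i : (Fin n → ℝ) →L[ℝ] ℝ).hasFDerivAt (x := y)).pow 2
  refine h.congr_fderiv (ContinuousLinearMap.ext fun z => ?_)
  simp [gradCLM_apply]

def expQuadratic (d : ℕ) (ρ ε : ℝ) : TestData d where
  φ t x := ε * (Real.exp (-ρ * t) * (1 + ∑ i, x i ^ 2))
  φt t x := -ρ * (ε * (Real.exp (-ρ * t) * (1 + ∑ i, x i ^ 2)))
  Dφ t x i := ε * Real.exp (-ρ * t) * (2 * x i)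
  D2φ t _ i j := ε * Real.exp (-ρ * t) * (if i = j then 2 else 0)

lemma isC12_expQuadratic (d : ℕ) (ρ ε : ℝ) : IsC12 (expQuadratic d ρ ε) := by
  refine ⟨fun s y => ?_, fun s y => ?_, fun s y i => ?_, ?_, ?_, ?_, ?_⟩ <;>
    dsimp only [expQuadratic]
  · exact (((hasDerivAt_id' s).const_mul (-ρ)).exp.mul_const
      (1 + ∑ i, y i ^ 2)).const_mul ε |>.congr_deriv (by ring)
  · refine (((hasFDerivAt_sum_sq y).const_add 1).const_mul (Real.exp (-ρ * s))).const_mul ε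
      |>.congr_fderiv (ContinuousLinearMap.ext fun z => ?_)
    simp only [neg_mul, smul_apply, gradCLM_apply, smul_eq_mul, Finset.mul_sum]
    exact Finset.sum_congr rfl fun i _ => by ring
  · have hlin : (fun z : Fin d → ℝ => ε * Real.exp (-ρ * s) * (2 * z i))
        = gradCLM fun j => ε * Real.exp (-ρ * s) * if i = j then 2 else 0 := by
      ext z
      simp only [neg_mul, mul_ite, mul_zero, gradCLM_apply, ite_mul, zero_mul,
        Finset.sum_ite_eq, Finset.mem_univ, if_true]
      ring
    rw [hlin]
    exact (gradCLM _).hasFDerivAt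
  all_goals fun_prop

lemma IsViscSupersoln.add_smooth {d : ℕ} {T : ℝ}
    {F : ℝ → (Fin d → ℝ) → ℝ → (Fin d → ℝ) → (Fin d → Fin d → ℝ) → ℝ}
    {u : ℝ → (Fin d → ℝ) → ℝ} (hu : IsViscSupersoln T F u) {Φ : TestData d} (hΦ : IsC12 Φ)
    (hF : ∀ t x r q N,
      Φ.φt t x + F t x (r + Φ.φ t x) (q + Φ.Dφ t x) (N + Φ.D2φ t x) ≤ F t x r q N) :
    IsViscSupersoln T F fun t x => u t x + Φ.φ t x := by
  intro t x ht htT ψ hψ hmin hval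
  have hmin' : IsLocalMinOn (fun q : ℝ × (Fin d → ℝ) => u q.1 q.2 - (ψ - Φ).φ q.1 q.2)
      (Icc 0 T ×ˢ univ) (t, x) := by
    convert hmin using 2 with q
    simp only [TestData.sub_φ, Pi.sub_apply]
    ring
  have h := hu t x ht htT (ψ - Φ) (hψ.sub hΦ) hmin' (by simp [← hval])
  have hF' := hF t x (u t x) (ψ.Dφ t x - Φ.Dφ t x) (ψ.D2φ t x - Φ.D2φ t x)
  simp only [sub_add_cancel] at hF'
  simp only [TestData.sub_φt, TestData.sub_Dφ, TestData.sub_D2φ, Pi.sub_apply] at h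
  linarith

def diffGenerator {d m : ℕ} (β : Fin d → ℝ) (s : Fin d → Fin m → ℝ) (q : Fin d → ℝ)
    (N : Fin d → Fin d → ℝ) : ℝ :=
  dotp β q + (1 / 2) * (∑ i, ∑ j, (∑ l, s i l * s j l) * N j i)

section Generator

variable {d m : ℕ} (β : Fin d → ℝ) (s : Fin d → Fin m → ℝ)

lemma diffGenerator_add (q q' : Fin d → ℝ) (N N' : Fin d → Fin d → ℝ) :
    diffGenerator β s (q + q') (N + N') = diffGenerator β s q N + diffGenerator β s q' N' := by
  simp only [diffGenerator, dotp, Pi.add_apply, mul_add, Finset.sum_add_distrib]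
  ring

lemma diffGenerator_const_mul (κ : ℝ) (q : Fin d → ℝ) (N : Fin d → Fin d → ℝ) :
    diffGenerator β s (fun i => κ * q i) (fun i j => κ * N i j) = κ * diffGenerator β s q N := by
  simp only [diffGenerator, dotp, mul_add, Finset.mul_sum]
  congr 1
  · exact Finset.sum_congr rfl fun i _ => by ring
  · exact Finset.sum_congr rfl fun i _ => Finset.sum_congr rfl fun j _ => by ring

lemma continuous_diffGenerator (q : Fin d → ℝ) (N : Fin d → Fin d → ℝ) :
    Continuous fun βs : (Fin d → ℝ) × (Fin d → Fin m → ℝ) => diffGenerator βs.1 βs.2 q N := by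
  unfold diffGenerator dotp
  fun_prop

lemma diffGenerator_quadratic (x : Fin d → ℝ) :
    diffGenerator β s (fun i => 2 * x i) (fun i j => if i = j then 2 else 0)
      = ∑ i, (β i * (2 * x i) + ∑ l, s i l ^ 2) := by
  simp only [diffGenerator, dotp, one_div, mul_ite, mul_zero, Finset.sum_ite_eq',
    Finset.mem_univ, if_true, Finset.mul_sum, sq, Finset.sum_add_distrib, add_right_inj]
  exact Finset.sum_congr rfl fun i _ => by ring

lemma diffGenerator_quadratic_le {Cb Cσ : ℝ} (hβ : ‖β‖ ≤ Cb) (hs : ‖s‖ ≤ Cσ) (x : Fin d → ℝ) :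
    diffGenerator β s (fun i => 2 * x i) (fun i j => if i = j then 2 else 0)
      ≤ d * (Cb + m * Cσ ^ 2) * (1 + ∑ i, x i ^ 2) := by
  have hCb : 0 ≤ Cb := (norm_nonneg β).trans hβ
  have hS : 0 ≤ ∑ j, x j ^ 2 := Finset.sum_nonneg fun j _ => sq_nonneg (x j)
  have hterm : ∀ i, β i * (2 * x i) + ∑ l, s i l ^ 2
      ≤ (Cb + m * Cσ ^ 2) * (1 + ∑ j, x j ^ 2) := by
    intro i
    have hxi : x i ^ 2 ≤ ∑ j, x j ^ 2 :=
      Finset.single_le_sum (fun j _ => sq_nonneg (x j)) (Finset.mem_univ i)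
    have hβi : |β i| ≤ Cb := (norm_le_pi_norm β i).trans hβ
    have hdrift : β i * (2 * x i) ≤ Cb * (1 + ∑ j, x j ^ 2) :=
      calc β i * (2 * x i) ≤ |β i * (2 * x i)| := le_abs_self _
        _ = |β i| * (2 * |x i|) := by rw [abs_mul, abs_mul, abs_two]
        _ ≤ Cb * (1 + x i ^ 2) := by
            gcongr
            nlinarith [sq_nonneg (|x i| - 1), sq_abs (x i)]
        _ ≤ Cb * (1 + ∑ j, x j ^ 2) := by gcongr
    have hdiff : ∑ l, s i l ^ 2 ≤ m * Cσ ^ 2 * (1 + ∑ j, x j ^ 2) := by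
      have hsil : ∀ l, s i l ^ 2 ≤ Cσ ^ 2 := fun l => by
        rw [← sq_abs]
        exact pow_le_pow_left₀ (abs_nonneg _)
          (((norm_le_pi_norm (s i) l).trans (norm_le_pi_norm s i)).trans hs) 2
      calc ∑ l, s i l ^ 2 ≤ ∑ _l : Fin m, Cσ ^ 2 := Finset.sum_le_sum fun l _ => hsil l
        _ = m * Cσ ^ 2 := by simp
        _ ≤ m * Cσ ^ 2 * (1 + ∑ j, x j ^ 2) :=
            le_mul_of_one_le_right (by positivity) (by linarith)
    linarith
  rw [diffGenerator_quadratic]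
  calc ∑ i, (β i * (2 * x i) + ∑ l, s i l ^ 2)
      ≤ ∑ _i : Fin d, (Cb + m * Cσ ^ 2) * (1 + ∑ j, x j ^ 2) :=
        Finset.sum_le_sum fun i _ => hterm i
    _ = d * (Cb + m * Cσ ^ 2) * (1 + ∑ i, x i ^ 2) := by simp [mul_assoc]

end Generator

section Hamiltonian

variable {d m : ℕ} {A : Type*} {b : (Fin d → ℝ) → A → (Fin d → ℝ)}
  {σ : (Fin d → ℝ) → A → (Fin d → Fin m → ℝ)} {γ : (Fin d → ℝ) → A → ℝ}
  {p : ℕ → (Fin d → ℝ) → A → ℝ} {c : (Fin d → ℝ) → A → ℝ} {x : Fin d → ℝ}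
  {γbar M Cb Cσ Cc : ℝ}

variable (b σ γ p c x) in
def hamIntegrand (a : A) (r : ℝ) (q : Fin d → ℝ) (N : Fin d → Fin d → ℝ) : ℝ :=
  diffGenerator (b x a) (σ x a) q N + Gb γ p x a r - c x a * r

lemma Ham_eq_iInf (r : ℝ) (q : Fin d → ℝ) (N : Fin d → Fin d → ℝ) :
    Ham b σ γ p c x r q N = ⨅ a, hamIntegrand b σ γ p c x a r q N := rfl

lemma bddBelow_range_hamIntegrand (hb : ∀ a, ‖b x a‖ ≤ Cb) (hσ : ∀ a, ‖σ x a‖ ≤ Cσ)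
    (hγ : ∀ a, γ x a ∈ Icc 0 γbar) (hp0 : ∀ k a, 0 ≤ p k x a)
    (hpsum : ∀ a, HasSum (fun k => p k x a) 1) (hc0 : ∀ a, 0 ≤ c x a) (hc : ∀ a, c x a ≤ Cc)
    (r : ℝ) (q : Fin d → ℝ) (N : Fin d → Fin d → ℝ) :
    BddBelow (range fun a => hamIntegrand b σ γ p c x a r q N) := by
  obtain ⟨L, hL⟩ := ((isCompact_closedBall 0 Cb).prod (isCompact_closedBall 0 Cσ)).bddBelow_image
    (continuous_diffGenerator q N).continuousOn
  refine ⟨L - 2 * γbar - Cc * |r|, ?_⟩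
  rintro _ ⟨a, rfl⟩
  have hgen := hL ⟨(b x a, σ x a),
    ⟨mem_closedBall_zero_iff.mpr (hb a), mem_closedBall_zero_iff.mpr (hσ a)⟩, rfl⟩
  have hG := neg_two_mul_le_Gb (hγ a) (hp0 · a) (hpsum a) r
  have hcr : c x a * r ≤ Cc * |r| :=
    calc c x a * r ≤ c x a * |r| := mul_le_mul_of_nonneg_left (le_abs_self r) (hc0 a)
      _ ≤ Cc * |r| := mul_le_mul_of_nonneg_right (hc a) (abs_nonneg r)
  dsimp only [hamIntegrand] at hgen ⊢
  linarith

lemma Ham_add_le [Nonempty A] (hb : ∀ a, ‖b x a‖ ≤ Cb) (hσ : ∀ a, ‖σ x a‖ ≤ Cσ)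
    (hγ : ∀ a, γ x a ∈ Icc 0 γbar) (hp0 : ∀ k a, 0 ≤ p k x a)
    (hpsum : ∀ a, HasSum (fun k => p k x a) 1)
    (hpmean : ∀ a, ∃ S, S ≤ M ∧ HasSum (fun k : ℕ => (k : ℝ) * p k x a) S)
    (hc0 : ∀ a, 0 ≤ c x a) (hc : ∀ a, c x a ≤ Cc) {r e L : ℝ} (he : 0 ≤ e)
    {q v : Fin d → ℝ} {N W : Fin d → Fin d → ℝ}
    (hL : ∀ a, diffGenerator (b x a) (σ x a) v W ≤ L) :
    Ham b σ γ p c x (r + e) (q + v) (N + W) ≤ Ham b σ γ p c x r q N + (L + γbar * M * e) := by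
  rw [Ham_eq_iInf, Ham_eq_iInf, ← sub_le_iff_le_add]
  refine le_ciInf fun a => sub_le_iff_le_add.mpr ?_
  refine (ciInf_le (bddBelow_range_hamIntegrand hb hσ hγ hp0 hpsum hc0 hc _ _ _) a).trans ?_
  have hG := Gb_sub_Gb_le (r := r) (hγ a) (hp0 · a) (hpsum a) (hpmean a)
    (le_add_of_nonneg_right he)
  have hce := mul_nonneg (hc0 a) he
  rw [hamIntegrand, hamIntegrand, diffGenerator_add]
  linarith [hL a]

lemma HamT_add_le [Nonempty A] (hb : ∀ a, ‖b x a‖ ≤ Cb) (hσ : ∀ a, ‖σ x a‖ ≤ Cσ)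
    (hγ : ∀ a, γ x a ∈ Icc 0 γbar) (hp0 : ∀ k a, 0 ≤ p k x a)
    (hpsum : ∀ a, HasSum (fun k => p k x a) 1)
    (hpmean : ∀ a, ∃ S, S ≤ M ∧ HasSum (fun k : ℕ => (k : ℝ) * p k x a) S)
    (hc0 : ∀ a, 0 ≤ c x a) (hc : ∀ a, c x a ≤ Cc) (lam t : ℝ) {r E K : ℝ} (hE : 0 ≤ E)
    {q v : Fin d → ℝ} {N W : Fin d → Fin d → ℝ}
    (hK : ∀ a, diffGenerator (b x a) (σ x a) v W ≤ K * E) :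
    HamT b σ γ p c lam t x (r + E) (q + v) (N + W)
      ≤ HamT b σ γ p c lam t x r q N + (K + γbar * M - lam) * E := by
  set s := Real.exp (-lam * t)
  have hs : 0 ≤ s := (Real.exp_pos _).le
  have hinv : Real.exp (lam * t) * s = 1 := by
    rw [← Real.exp_add, show lam * t + -lam * t = 0 by ring, Real.exp_zero]
  have h := Ham_add_le (r := s * r) (q := fun i => s * q i) (N := fun i j => s * N i j)
    hb hσ hγ hp0 hpsum hpmean hc0 hc (mul_nonneg hs hE) (L := s * (K * E)) fun a => by
      rw [diffGenerator_const_mul]; exact mul_le_mul_of_nonneg_left (hK a) hs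
  have hq : (fun i => s * (q + v) i) = (fun i => s * q i) + fun i => s * v i := by
    ext i; simp [mul_add]
  have hN : (fun i j => s * (N + W) i j) = (fun i j => s * N i j) + fun i j => s * W i j := by
    ext i j; simp [mul_add]
  have hexp := mul_le_mul_of_nonneg_left h (Real.exp_pos (lam * t)).le
  unfold HamT
  rw [hq, hN, mul_add s r E]
  linear_combination hexp + (K * E + γbar * M * E) * hinv

end Hamiltonian

theorem supersolution_perturbation_general
    (d m : ℕ)
    (A : Type) [Nonempty A]
    (γbar M : ℝ)
    (b : (Fin d → ℝ) → A → (Fin d → ℝ))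
    (σ : (Fin d → ℝ) → A → (Fin d → Fin m → ℝ))
    (γ : (Fin d → ℝ) → A → ℝ)
    (p : ℕ → (Fin d → ℝ) → A → ℝ)
    (c : (Fin d → ℝ) → A → ℝ)
    (hb_bdd : ∃ C, ∀ x a, ‖b x a‖ ≤ C)
    (hσ_bdd : ∃ C, ∀ x a, ‖σ x a‖ ≤ C)
    (hγ : ∀ x a, γ x a ∈ Set.Icc (0 : ℝ) γbar)
    (hp01 : ∀ k x a, p k x a ∈ Set.Icc (0 : ℝ) 1)
    (hpsum : ∀ x a, HasSum (fun k => p k x a) 1)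
    (hpmean : ∀ x a, ∃ S, S ≤ M ∧ HasSum (fun k : ℕ => (k : ℝ) * p k x a) S)
    (hc0 : ∀ x a, 0 ≤ c x a) (hc_bdd : ∃ C, ∀ x a, c x a ≤ C)
    (T : ℝ) :
    ∃ ρ₀ : ℝ, 0 ≤ ρ₀ ∧ ∀ ρ : ℝ, ρ₀ ≤ ρ → ∀ ε : ℝ, 0 < ε →
      ∀ u : ℝ → (Fin d → ℝ) → ℝ,
        ContinuousOn (fun q : ℝ × (Fin d → ℝ) => u q.1 q.2)
          (Set.Icc 0 T ×ˢ (Set.univ : Set (Fin d → ℝ))) →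
        (∃ C, ∀ t ∈ Set.Icc (0 : ℝ) T, ∀ x, |u t x| ≤ C) →
        IsViscSupersoln T (HamT b σ γ p c (γbar * M + 1)) u →
        IsViscSupersoln T (HamT b σ γ p c (γbar * M + 1))
          (fun t x => u t x + ε * (Real.exp (-ρ * t) * (1 + ∑ i, x i ^ 2))) := by
  obtain ⟨Cb, hCb⟩ := hb_bdd
  obtain ⟨Cσ, hCσ⟩ := hσ_bdd
  obtain ⟨Cc, hCc⟩ := hc_bdd
  have hCb0 : 0 ≤ Cb := (norm_nonneg _).trans (hCb 0 (Classical.arbitrary A))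
  set K : ℝ := d * (Cb + m * Cσ ^ 2)
  refine ⟨K, by positivity, fun ρ hρ ε hε u _ _ hu => ?_⟩
  refine hu.add_smooth (isC12_expQuadratic d ρ ε) fun t x r q N => ?_
  have hε' : 0 ≤ ε * Real.exp (-ρ * t) := by positivity
  have hΦ : 0 ≤ (expQuadratic d ρ ε).φ t x := by dsimp only [expQuadratic]; positivity
  have h := HamT_add_le (hCb x) (hCσ x) (hγ x) (fun k a => (hp01 k x a).1) (hpsum x) (hpmean x)
    (hc0 x) (hCc x) (γbar * M + 1) t (r := r) (q := q) (N := N) hΦ (K := K) fun a => by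
      dsimp only [expQuadratic]
      rw [diffGenerator_const_mul]
      have hL := diffGenerator_quadratic_le (b x a) (σ x a) (hCb x a) (hCσ x a) x
      calc ε * Real.exp (-ρ * t) * _ ≤ ε * Real.exp (-ρ * t) * (K * (1 + ∑ i, x i ^ 2)) :=
            mul_le_mul_of_nonneg_left hL hε'
        _ = K * (ε * (Real.exp (-ρ * t) * (1 + ∑ i, x i ^ 2))) := by ring
  dsimp only [expQuadratic] at h hΦ ⊢
  linarith [mul_le_mul_of_nonneg_right hρ hΦ]

/-- Perturbation of supersolutions: there is `ρ₀ ≥ 0`, depending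
only on the data, such that for every `ρ ≥ ρ₀`, `ε > 0` and every bounded
continuous viscosity supersolution `u` of `∂ₜ u + H̃ = 0` on `[0,T) × ℝ^d`
(with `λ = γ̄·M + 1`), the function `u + ε·e^{−ρt}(1 + |x|²)` is again a
viscosity supersolution of the same equation. -/
theorem supersolution_perturbation
    (d m : ℕ) (hd : 0 < d) (hm : 0 < m)
    (A : Type) [Nonempty A]
    (γbar M : ℝ) (hγbar : 0 < γbar) (hM : 0 < M)
    (b : (Fin d → ℝ) → A → (Fin d → ℝ))
    (σ : (Fin d → ℝ) → A → (Fin d → Fin m → ℝ))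
    (γ : (Fin d → ℝ) → A → ℝ)
    (p : ℕ → (Fin d → ℝ) → A → ℝ)
    (c : (Fin d → ℝ) → A → ℝ)
    (hb_bdd : ∃ C, ∀ x a, ‖b x a‖ ≤ C)
    (hσ_bdd : ∃ C, ∀ x a, ‖σ x a‖ ≤ C)
    (hγ : ∀ x a, γ x a ∈ Set.Icc (0 : ℝ) γbar)
    (hp01 : ∀ k x a, p k x a ∈ Set.Icc (0 : ℝ) 1)
    (hpsum : ∀ x a, HasSum (fun k => p k x a) 1)
    (hpmean : ∀ x a, ∃ S, S ≤ M ∧ HasSum (fun k : ℕ => (k : ℝ) * p k x a) S)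
    (hc0 : ∀ x a, 0 ≤ c x a) (hc_bdd : ∃ C, ∀ x a, c x a ≤ C)
    (T : ℝ) (hT : 0 < T) :
    ∃ ρ₀ : ℝ, 0 ≤ ρ₀ ∧ ∀ ρ : ℝ, ρ₀ ≤ ρ → ∀ ε : ℝ, 0 < ε →
      ∀ u : ℝ → (Fin d → ℝ) → ℝ,
        ContinuousOn (fun q : ℝ × (Fin d → ℝ) => u q.1 q.2)
          (Set.Icc 0 T ×ˢ (Set.univ : Set (Fin d → ℝ))) →
        (∃ C, ∀ t ∈ Set.Icc (0 : ℝ) T, ∀ x, |u t x| ≤ C) →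
        IsViscSupersoln T (HamT b σ γ p c (γbar * M + 1)) u →
        IsViscSupersoln T (HamT b σ γ p c (γbar * M + 1))
          (fun t x => u t x + ε * (Real.exp (-ρ * t) * (1 + ∑ i, x i ^ 2))) :=
  supersolution_perturbation_general d m A γbar M b σ γ p c hb_bdd hσ_bdd hγ hp01 hpsum hpmean hc0
    hc_bdd T

end
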